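/- arXiv:1612.08129 — 5 statements merged into one kernel-verified Lean document; each statement's English description precedes it below -/
import Mathlib

section
/- Let h, g, P, Q be positive reals, γ(t) = g²(Q − t²)/((h√P − g·t)² + 1), and let t₁ < t₂ be the two roots t = [(h²P + g²Q + 1) ∓ √((h²P + g²Q + 1)² − 4h²g²PQ)]/(2hg√P). Then γ is monotonically nondecreasing on [0, t₁], nonincreasing on [t₁, t₂], and nondecreasing on [t₂, ∞). -/
theorem stmt4 (h g P Q : ℝ) (hh : 0 < h) (hg : 0 < g) (hP : 0 < P) (hQ : 0 < Q)
    (γ : ℝ → ℝ)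
    (hγ : γ = fun t : ℝ => g ^ 2 * (Q - t ^ 2) / ((h * Real.sqrt P - g * t) ^ 2 + 1))
    (t₁ t₂ : ℝ)
    (ht₁ : t₁ = ((h ^ 2 * P + g ^ 2 * Q + 1) -
        Real.sqrt ((h ^ 2 * P + g ^ 2 * Q + 1) ^ 2 - 4 * h ^ 2 * g ^ 2 * P * Q)) /
        (2 * h * g * Real.sqrt P))
    (ht₂ : t₂ = ((h ^ 2 * P + g ^ 2 * Q + 1) +
        Real.sqrt ((h ^ 2 * P + g ^ 2 * Q + 1) ^ 2 - 4 * h ^ 2 * g ^ 2 * P * Q)) /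
        (2 * h * g * Real.sqrt P)) :
    MonotoneOn γ (Set.Icc 0 t₁) ∧ AntitoneOn γ (Set.Icc t₁ t₂) ∧
      MonotoneOn γ (Set.Ici t₂) := by
  set a := h * Real.sqrt P with ha_def
  have hsP : 0 < Real.sqrt P := Real.sqrt_pos.mpr hP
  have ha : 0 < a := mul_pos hh hsP
  have ha2 : a ^ 2 = h ^ 2 * P := by
    rw [ha_def, mul_pow, Real.sq_sqrt hP.le]
  set K := a ^ 2 + g ^ 2 * Q + 1 with hK_def
  have hKpos : 0 < K := by positivity
  have hrad : (0:ℝ) ≤ K ^ 2 - 4 * a ^ 2 * g ^ 2 * Q := by nlinarith [sq_nonneg (a^2 - g^2*Q), sq_nonneg (a^2 + g^2*Q)]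
  set S := Real.sqrt (K ^ 2 - 4 * a ^ 2 * g ^ 2 * Q) with hS_def
  have hS : 0 ≤ S := Real.sqrt_nonneg _
  have hS2 : S ^ 2 = K ^ 2 - 4 * a ^ 2 * g ^ 2 * Q := Real.sq_sqrt hrad
  have hKeq : h ^ 2 * P + g ^ 2 * Q + 1 = K := by rw [hK_def, ha2]
  have hradeq : K ^ 2 - 4 * h ^ 2 * g ^ 2 * P * Q
      = K ^ 2 - 4 * a ^ 2 * g ^ 2 * Q := by rw [ha2]; ring
  have hdeneq : 2 * h * g * Real.sqrt P = 2 * a * g := by rw [ha_def]; ring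
  have ht₁' : t₁ = (K - S) / (2 * a * g) := by
    rw [ht₁, hKeq, hradeq, hdeneq, hS_def]
  have ht₂' : t₂ = (K + S) / (2 * a * g) := by
    rw [ht₂, hKeq, hradeq, hdeneq, hS_def]
  have hag : (0:ℝ) < 2 * a * g := by positivity
  have ht12 : t₁ ≤ t₂ := by
    rw [ht₁', ht₂']
    gcongr
    linarith
  have hsum : a * g * (t₁ + t₂) = K := by
    rw [ht₁', ht₂']; field_simp; ring
  have hprod : t₁ * t₂ = Q := by
    rw [ht₁', ht₂']
    rw [div_mul_div_comm]
    rw [div_eq_iff (by positivity)]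
    nlinarith [hS2]
  have hfac : ∀ t : ℝ, a * g * t ^ 2 - K * t + a * g * Q = a * g * (t - t₁) * (t - t₂) := by
    intro t
    linear_combination t * hsum - a * g * hprod
  have hDpos : ∀ t : ℝ, 0 < (a - g * t) ^ 2 + 1 := fun t => by positivity
  have hDrv : ∀ t : ℝ, HasDerivAt γ
      (2 * g ^ 2 * (a * g * (t - t₁) * (t - t₂)) / (((a - g * t) ^ 2 + 1) ^ 2)) t := by
    intro t
    have hN : HasDerivAt (fun t : ℝ => g ^ 2 * (Q - t ^ 2)) (g ^ 2 * (0 - 2 * t)) t := by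
      have h1 : HasDerivAt (fun t : ℝ => Q - t ^ 2) (0 - 2 * t) t := by
        have := (hasDerivAt_pow 2 t)
        exact ((hasDerivAt_const t Q).sub this).congr_deriv (by norm_num)
      simpa using h1.const_mul (g ^ 2)
    have hInner : HasDerivAt (fun t : ℝ => a - g * t) (0 - g * 1) t :=
      (hasDerivAt_const t a).sub ((hasDerivAt_id t).const_mul g)
    have hD : HasDerivAt (fun t : ℝ => (a - g * t) ^ 2 + 1)
        ((2 : ℕ) * (a - g * t) ^ 1 * (0 - g * 1) + 0) t :=
      (hInner.pow 2).add (hasDerivAt_const t 1)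
    have hdiv := hN.div hD (ne_of_gt (hDpos t))
    rw [hγ]
    refine hdiv.congr_deriv ?_
    rw [← hfac t]
    field_simp
    ring
  have hdiff : Differentiable ℝ γ := fun t => (hDrv t).differentiableAt
  have hderiv : ∀ t : ℝ, deriv γ t =
      2 * g ^ 2 * (a * g * (t - t₁) * (t - t₂)) / (((a - g * t) ^ 2 + 1) ^ 2) :=
    fun t => (hDrv t).deriv
  refine ⟨?_, ?_, ?_⟩
  · apply monotoneOn_of_deriv_nonneg (convex_Icc 0 t₁) hdiff.continuous.continuousOn
      (hdiff.differentiableOn)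
    intro x hx
    rw [interior_Icc] at hx
    rw [hderiv]
    apply div_nonneg _ (by positivity)
    have hp : 0 ≤ (x - t₁) * (x - t₂) :=
      mul_nonneg_iff.mpr (Or.inr ⟨by linarith [hx.2], by linarith [hx.2, ht12]⟩)
    have he : 2 * g ^ 2 * (a * g * (x - t₁) * (x - t₂))
        = 2 * g ^ 2 * (a * g) * ((x - t₁) * (x - t₂)) := by ring
    rw [he]
    exact mul_nonneg (by positivity) hp
  · apply antitoneOn_of_deriv_nonpos (convex_Icc t₁ t₂) hdiff.continuous.continuousOn
      (hdiff.differentiableOn)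
    intro x hx
    rw [interior_Icc] at hx
    rw [hderiv]
    apply div_nonpos_of_nonpos_of_nonneg _ (by positivity)
    have hp : (x - t₁) * (x - t₂) ≤ 0 :=
      mul_nonpos_iff.mpr (Or.inl ⟨by linarith [hx.1], by linarith [hx.2]⟩)
    have he : 2 * g ^ 2 * (a * g * (x - t₁) * (x - t₂))
        = 2 * g ^ 2 * (a * g) * ((x - t₁) * (x - t₂)) := by ring
    rw [he]
    exact mul_nonpos_of_nonneg_of_nonpos (by positivity) hp
  · apply monotoneOn_of_deriv_nonneg (convex_Ici t₂) hdiff.continuous.continuousOn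
      (hdiff.differentiableOn)
    intro x hx
    rw [interior_Ici] at hx
    rw [hderiv]
    apply div_nonneg _ (by positivity)
    have hx' : t₂ < x := hx
    have hp : 0 ≤ (x - t₁) * (x - t₂) :=
      mul_nonneg (by linarith) (by linarith)
    have he : 2 * g ^ 2 * (a * g * (x - t₁) * (x - t₂))
        = 2 * g ^ 2 * (a * g) * ((x - t₁) * (x - t₂)) := by ring
    rw [he]
    exact mul_nonneg (by positivity) hp
end

section
/- Let h, g, P, Q be positive reals, γ(t) = g²(Q − t²)/((h√P − g·t)² + 1), and t₁ = [(h²P + g²Q + 1) − √((h²P + g²Q + 1)² − 4h²g²PQ)]/(2hg√P). Then t₁ is a global maximizer of γ over [0, ∞): for all t ≥ 0, γ(t) ≤ γ(t₁). -/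
/-!
Substituting `u = g t`, `a = h √P`, `B = g² Q` turns `γ` into
`f u = (B - u²) / ((a - u)² + 1)`, and `g t₁` into the smaller root `v` of
`a v² - (a² + B + 1) v + a B = 0`. For such a root one has the identity
`(B - v²)((a - u)² + 1) - (B - u²)((a - v)² + 1) = (a² + B + 1 - 2 a v)(u - v)²`,
whose right-hand side is `√D (u - v)² ≥ 0`, `D` being the discriminant;
hence `f u ≤ f v` for all `u`.
-/

open Real

lemma div_le_div_of_quadratic_root {a B v : ℝ}
    (hv : a * v ^ 2 - (a ^ 2 + B + 1) * v + a * B = 0) (hs : 0 ≤ a ^ 2 + B + 1 - 2 * a * v)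
    (u : ℝ) : (B - u ^ 2) / ((a - u) ^ 2 + 1) ≤ (B - v ^ 2) / ((a - v) ^ 2 + 1) := by
  have key : (B - v ^ 2) * ((a - u) ^ 2 + 1) - (B - u ^ 2) * ((a - v) ^ 2 + 1)
      = (a ^ 2 + B + 1 - 2 * a * v) * (u - v) ^ 2 := by
    linear_combination (-2 * (u - v)) * hv
  rw [div_le_div_iff₀ (by positivity) (by positivity)]
  linarith [mul_nonneg hs (sq_nonneg (u - v))]

lemma discrim_nonneg (a B : ℝ) : 0 ≤ (a ^ 2 + B + 1) ^ 2 - 4 * a ^ 2 * B := by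
  have h : (a ^ 2 + B + 1) ^ 2 - 4 * a ^ 2 * B = (B - a ^ 2 + 1) ^ 2 + 4 * a ^ 2 := by ring
  rw [h]
  positivity

noncomputable def smallerRoot (a B : ℝ) : ℝ :=
  (a ^ 2 + B + 1 - √((a ^ 2 + B + 1) ^ 2 - 4 * a ^ 2 * B)) / (2 * a)

lemma sub_two_mul_smallerRoot {a : ℝ} (B : ℝ) (ha : a ≠ 0) :
    a ^ 2 + B + 1 - 2 * a * smallerRoot a B = √((a ^ 2 + B + 1) ^ 2 - 4 * a ^ 2 * B) := by
  unfold smallerRoot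
  field_simp
  ring

lemma smallerRoot_isRoot {a : ℝ} (B : ℝ) (ha : a ≠ 0) :
    a * smallerRoot a B ^ 2 - (a ^ 2 + B + 1) * smallerRoot a B + a * B = 0 := by
  have hs := sq_sqrt (discrim_nonneg a B)
  unfold smallerRoot
  set s := √((a ^ 2 + B + 1) ^ 2 - 4 * a ^ 2 * B)
  field_simp
  linear_combination hs

lemma div_le_div_smallerRoot {a : ℝ} (B : ℝ) (ha : a ≠ 0) (u : ℝ) :
    (B - u ^ 2) / ((a - u) ^ 2 + 1) ≤ (B - smallerRoot a B ^ 2) / ((a - smallerRoot a B) ^ 2 + 1) :=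
  div_le_div_of_quadratic_root (smallerRoot_isRoot B ha)
    ((sub_two_mul_smallerRoot B ha).symm ▸ sqrt_nonneg _) u

theorem stmt6_general (h g P Q : ℝ) (hh : 0 < h) (hg : 0 < g) (hP : 0 < P)
    (γ : ℝ → ℝ)
    (hγ : γ = fun t : ℝ => g ^ 2 * (Q - t ^ 2) / ((h * Real.sqrt P - g * t) ^ 2 + 1))
    (t₁ : ℝ)
    (ht₁ : t₁ = ((h ^ 2 * P + g ^ 2 * Q + 1) -
        Real.sqrt ((h ^ 2 * P + g ^ 2 * Q + 1) ^ 2 - 4 * h ^ 2 * g ^ 2 * P * Q)) /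
        (2 * h * g * Real.sqrt P)) :
    ∀ t : ℝ, 0 ≤ t → γ t ≤ γ t₁ := by
  intro t _
  set a := h * √P
  have ha : a ≠ 0 := by positivity
  have ha2 : a ^ 2 = h ^ 2 * P := by rw [mul_pow, sq_sqrt hP.le]
  set B := g ^ 2 * Q
  have hv : g * t₁ = smallerRoot a B := by
    have hD : (h ^ 2 * P + B + 1) ^ 2 - 4 * h ^ 2 * g ^ 2 * P * Q
        = (a ^ 2 + B + 1) ^ 2 - 4 * a ^ 2 * B := by rw [ha2]; ring
    rw [ht₁, hD, ← ha2, smallerRoot]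
    field_simp
    ring
  have key := div_le_div_smallerRoot B ha (g * t)
  rw [← hv] at key
  simp only [hγ]
  convert key using 2 <;> ring

theorem stmt6 (h g P Q : ℝ) (hh : 0 < h) (hg : 0 < g) (hP : 0 < P) (hQ : 0 < Q)
    (γ : ℝ → ℝ)
    (hγ : γ = fun t : ℝ => g ^ 2 * (Q - t ^ 2) / ((h * Real.sqrt P - g * t) ^ 2 + 1))
    (t₁ : ℝ)
    (ht₁ : t₁ = ((h ^ 2 * P + g ^ 2 * Q + 1) -
        Real.sqrt ((h ^ 2 * P + g ^ 2 * Q + 1) ^ 2 - 4 * h ^ 2 * g ^ 2 * P * Q)) /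
        (2 * h * g * Real.sqrt P)) :
    ∀ t : ℝ, 0 ≤ t → γ t ≤ γ t₁ :=
  stmt6_general h g P Q hh hg hP γ hγ t₁ ht₁
end

section
/- Let h, g, P, Q be positive reals and t₁ = [(h²P + g²Q + 1) − √((h²P + g²Q + 1)² − 4h²g²PQ)]/(2hg√P). Then 0 < t₁ ≤ √Q, so the globally optimal cancelation amplitude never exceeds the square root of the spoofing power budget. -/
/-! With `c = h√P`, `d = g√Q` and `s = c² + d² + 1`, one has `t₁ = √Q · x`, where
`x = (s - √(s² - (2cd)²)) / (2cd)` is the smaller root of `cd·x² - s·x + cd`. The roots of that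
quadratic are positive with product `1`, so `0 < x ≤ 1`; concretely this is
`0 < s - √(s² - a²) ≤ a` for `a = 2cd`, which holds because `0 < a ≤ c² + d² < s` by AM-GM. -/

lemma sub_sqrt_sq_sub_sq_pos {a s : ℝ} (ha : 0 < a) (has : a ≤ s) :
    0 < s - √(s ^ 2 - a ^ 2) := by
  have hlt : √(s ^ 2 - a ^ 2) < s :=
    (Real.sqrt_lt' (ha.trans_le has)).2 (by nlinarith)
  linarith

lemma sub_sqrt_sq_sub_sq_le {a s : ℝ} (ha : 0 ≤ a) (has : a ≤ s) :
    s - √(s ^ 2 - a ^ 2) ≤ a := by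
  have hle : s - a ≤ √(s ^ 2 - a ^ 2) :=
    Real.le_sqrt_of_sq_le (by nlinarith [mul_nonneg ha (sub_nonneg.2 has)])
  linarith

theorem stmt7 (h g P Q : ℝ) (hh : 0 < h) (hg : 0 < g) (hP : 0 < P) (hQ : 0 < Q)
    (t₁ : ℝ)
    (ht₁ : t₁ = ((h ^ 2 * P + g ^ 2 * Q + 1) -
        Real.sqrt ((h ^ 2 * P + g ^ 2 * Q + 1) ^ 2 - 4 * h ^ 2 * g ^ 2 * P * Q)) /
        (2 * h * g * Real.sqrt P)) :
    0 < t₁ ∧ t₁ ≤ Real.sqrt Q := by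
  have hsP : 0 < √P := Real.sqrt_pos.2 hP
  have hsQ : 0 < √Q := Real.sqrt_pos.2 hQ
  set s := h ^ 2 * P + g ^ 2 * Q + 1
  set a := 2 * (h * √P) * (g * √Q)
  have ha : 0 < a := by positivity
  have has : a ≤ s := by
    have hs : s = (h * √P) ^ 2 + (g * √Q) ^ 2 + 1 := by
      simp only [s, mul_pow, Real.sq_sqrt hP.le, Real.sq_sqrt hQ.le]
    nlinarith [sq_nonneg (h * √P - g * √Q)]
  have ht : t₁ = √Q * ((s - √(s ^ 2 - a ^ 2)) / a) := by
    have hdisc : 4 * h ^ 2 * g ^ 2 * P * Q = a ^ 2 := by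
      simp only [a, mul_pow, Real.sq_sqrt hP.le, Real.sq_sqrt hQ.le]; ring
    rw [ht₁, hdisc]
    field_simp
    ring
  have hx_pos := div_pos (sub_sqrt_sq_sub_sq_pos ha has) ha
  have hx_le := (div_le_one ha).2 (sub_sqrt_sq_sub_sq_le ha.le has)
  rw [ht]
  exact ⟨mul_pos hsQ hx_pos, mul_le_of_le_one_right hsQ.le hx_le⟩
end

section
/- Let h, g, P, Q, δ be positive reals with Q ≥ (h²P + 2δ)/(2g²). Let ω_low = (h√P − √(2g²Q − h²P − 2δ))/(2g), ω_high = (h√P + √(2g²Q − h²P − 2δ))/(2g), and t₁ = [(h²P + g²Q + 1) − √((h²P + g²Q + 1)² − 4h²g²PQ)]/(2hg√P). Then γ(t) = g²(Q − t²)/((h√P − g·t)² + 1) attains its maximum over the interval [ω_low, ω_high] at t* = max(ω_low, t₁): for all t ∈ [ω_low, ω_high], γ(t) ≤ γ(max(ω_low, t₁)). -/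
theorem stmt8 (h g P Q δ : ℝ) (hh : 0 < h) (hg : 0 < g) (hP : 0 < P) (hQ : 0 < Q)
    (hδ : 0 < δ) (hfeas : Q ≥ (h ^ 2 * P + 2 * δ) / (2 * g ^ 2))
    (γ : ℝ → ℝ)
    (hγ : γ = fun t : ℝ => g ^ 2 * (Q - t ^ 2) / ((h * Real.sqrt P - g * t) ^ 2 + 1))
    (ωlow ωhigh t₁ : ℝ)
    (hωlow : ωlow = (h * Real.sqrt P - Real.sqrt (2 * g ^ 2 * Q - h ^ 2 * P - 2 * δ)) / (2 * g))
    (hωhigh : ωhigh = (h * Real.sqrt P + Real.sqrt (2 * g ^ 2 * Q - h ^ 2 * P - 2 * δ)) / (2 * g))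
    (ht₁ : t₁ = ((h ^ 2 * P + g ^ 2 * Q + 1) -
        Real.sqrt ((h ^ 2 * P + g ^ 2 * Q + 1) ^ 2 - 4 * h ^ 2 * g ^ 2 * P * Q)) /
        (2 * h * g * Real.sqrt P)) :
    ∀ t ∈ Set.Icc ωlow ωhigh, γ t ≤ γ (max ωlow t₁) := by
  intro t ht
  set a := h * Real.sqrt P with ha_def
  have hsP : 0 < Real.sqrt P := Real.sqrt_pos.mpr hP
  have ha : 0 < a := mul_pos hh hsP
  have haP : a ^ 2 = h ^ 2 * P := by rw [ha_def, mul_pow, Real.sq_sqrt hP.le]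
  set b := a ^ 2 + g ^ 2 * Q + 1 with hb_def
  have hΔ0 : 0 ≤ b ^ 2 - 4 * a ^ 2 * g ^ 2 * Q := by
    have : b ^ 2 - 4 * a ^ 2 * g ^ 2 * Q
        = (a ^ 2 - g ^ 2 * Q) ^ 2 + 2 * a ^ 2 + 2 * g ^ 2 * Q + 1 := by rw [hb_def]; ring
    rw [this]; positivity
  set s := Real.sqrt (b ^ 2 - 4 * a ^ 2 * g ^ 2 * Q) with hs_def
  have hs0 : 0 ≤ s := Real.sqrt_nonneg _
  have hs2 : s ^ 2 = b ^ 2 - 4 * a ^ 2 * g ^ 2 * Q := Real.sq_sqrt hΔ0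
  have h2ag : (0:ℝ) < 2 * a * g := by positivity
  have ht₁' : t₁ = (b - s) / (2 * a * g) := by
    rw [ht₁]
    have e2 : h ^ 2 * P + g ^ 2 * Q + 1 = b := by rw [hb_def, haP]
    have e3 : (h ^ 2 * P + g ^ 2 * Q + 1) ^ 2 - 4 * h ^ 2 * g ^ 2 * P * Q
        = b ^ 2 - 4 * a ^ 2 * g ^ 2 * Q := by rw [hb_def, haP]; ring
    have e1 : 2 * h * g * Real.sqrt P = 2 * a * g := by rw [ha_def]; ring
    rw [e3, e2, e1, hs_def]
  -- feasibility: the inner sqrt argument is nonneg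
  have hfe : 0 ≤ 2 * g ^ 2 * Q - h ^ 2 * P - 2 * δ := by
    rw [ge_iff_le, div_le_iff₀ (by positivity)] at hfeas
    linarith
  set s' := Real.sqrt (2 * g ^ 2 * Q - h ^ 2 * P - 2 * δ) with hs'_def
  have hs'0 : 0 ≤ s' := Real.sqrt_nonneg _
  have hs'2 : s' ^ 2 = 2 * g ^ 2 * Q - h ^ 2 * P - 2 * δ := Real.sq_sqrt hfe
  set c := b / (2 * a * g) with hc_def
  have hωc : ωhigh ≤ c := by
    rw [hωhigh, hc_def, div_le_div_iff₀ (by positivity) h2ag]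
    nlinarith [sq_nonneg (a - s'), haP, hs'2]
  -- derivative of γ
  have hD : ∀ x : ℝ, (0:ℝ) < (a - g * x) ^ 2 + 1 := fun x => by positivity
  have hder : ∀ x : ℝ, HasDerivAt (fun t => g ^ 2 * (Q - t ^ 2) / ((a - g * t) ^ 2 + 1))
      (2 * g ^ 2 * (a * g * x ^ 2 - b * x + a * g * Q) / (((a - g * x) ^ 2 + 1) ^ 2)) x := by
    intro x
    have h1 : HasDerivAt (fun t : ℝ => g ^ 2 * (Q - t ^ 2)) (g ^ 2 * (0 - 2 * x)) x := by
      have h0 : HasDerivAt (fun t : ℝ => Q - t ^ 2) (0 - 2 * x) x := by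
        simpa using (hasDerivAt_pow 2 x).const_sub Q
      exact h0.const_mul _
    have hl : HasDerivAt (fun t : ℝ => a - g * t) (0 - g * 1) x := by
      simpa using ((hasDerivAt_id x).const_mul g).const_sub a
    have h2 : HasDerivAt (fun t : ℝ => (a - g * t) ^ 2 + 1)
        (2 * (a - g * x) ^ 1 * (0 - g * 1)) x := by
      simpa using ((hl.pow 2).add_const 1)
    have h3 := h1.div h2 (ne_of_gt (hD x))
    convert h3 using 1
    · rfl
    · rfl
    · rfl
    have hDx := (hD x).ne'
    rw [hb_def]
    ring
  have hdiff : Differentiable ℝ (fun t => g ^ 2 * (Q - t ^ 2) / ((a - g * t) ^ 2 + 1)) :=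
    fun x => (hder x).differentiableAt
  -- sign of F := a*g*x^2 - b*x + a*g*Q
  have hFpos : ∀ x ≤ t₁, 0 ≤ a * g * x ^ 2 - b * x + a * g * Q := by
    intro x hx
    rw [ht₁', le_div_iff₀ h2ag] at hx
    have f1 : 0 ≤ b - s - x * (2 * a * g) := by linarith
    have f2 : 0 ≤ b + s - x * (2 * a * g) := by linarith
    have key : (b - s - x * (2 * a * g)) * (b + s - x * (2 * a * g))
        = 4 * (a * g) * (a * g * x ^ 2 - b * x + a * g * Q) := by linear_combination -hs2
    have h4 : 0 ≤ 4 * (a * g) * (a * g * x ^ 2 - b * x + a * g * Q) := by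
      rw [← key]; exact mul_nonneg f1 f2
    have hag : (0:ℝ) < 4 * (a * g) := by positivity
    exact le_of_mul_le_mul_left (by linarith) hag
  have hFneg : ∀ x, t₁ ≤ x → x ≤ c → a * g * x ^ 2 - b * x + a * g * Q ≤ 0 := by
    intro x hx1 hx2
    rw [ht₁', div_le_iff₀ h2ag] at hx1
    rw [hc_def, le_div_iff₀ h2ag] at hx2
    have f1 : 0 ≤ x * (2 * a * g) - (b - s) := by linarith
    have f2 : 0 ≤ s + (b - x * (2 * a * g)) := by linarith
    have key : (x * (2 * a * g) - (b - s)) * (s + (b - x * (2 * a * g)))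
        = -(4 * (a * g) * (a * g * x ^ 2 - b * x + a * g * Q)) := by linear_combination hs2
    have h4 : 4 * (a * g) * (a * g * x ^ 2 - b * x + a * g * Q) ≤ 0 := by
      have h0 := mul_nonneg f1 f2
      rw [key] at h0
      linarith
    have hag : (0:ℝ) < 4 * (a * g) := by positivity
    exact le_of_mul_le_mul_left (by linarith) hag
  have hmono : MonotoneOn (fun t => g ^ 2 * (Q - t ^ 2) / ((a - g * t) ^ 2 + 1)) (Set.Iic t₁) := by
    apply monotoneOn_of_deriv_nonneg (convex_Iic t₁) hdiff.continuous.continuousOn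
      (hdiff.differentiableOn)
    intro x hx
    rw [interior_Iic] at hx
    rw [(hder x).deriv]
    have hF := hFpos x (le_of_lt hx)
    have := hD x
    positivity
  have hanti : AntitoneOn (fun t => g ^ 2 * (Q - t ^ 2) / ((a - g * t) ^ 2 + 1))
      (Set.Icc t₁ c) := by
    apply antitoneOn_of_deriv_nonpos (convex_Icc t₁ c) hdiff.continuous.continuousOn
      (hdiff.differentiableOn)
    intro x hx
    rw [interior_Icc] at hx
    rw [(hder x).deriv]
    have hF := hFneg x hx.1.le hx.2.le
    apply div_nonpos_of_nonpos_of_nonneg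
    · exact mul_nonpos_of_nonneg_of_nonpos (by positivity) hF
    · positivity
  set m := max ωlow t₁ with hm
  have hγ' : γ = fun t => g ^ 2 * (Q - t ^ 2) / ((a - g * t) ^ 2 + 1) := hγ
  rcases le_total t m with htm | htm
  · rcases le_total ωlow t₁ with hcase | hcase
    · have hm' : m = t₁ := max_eq_right hcase
      have htm' : t ≤ t₁ := hm' ▸ htm
      rw [hγ', hm']
      exact hmono (Set.mem_Iic.mpr htm') Set.self_mem_Iic htm'
    · have hm' : m = ωlow := max_eq_left hcase
      have : t = m := le_antisymm htm (hm' ▸ ht.1)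
      rw [this]
  · have h1 : t₁ ≤ m := le_max_right _ _
    have h2 : t ≤ c := le_trans ht.2 hωc
    rw [hγ']
    exact hanti ⟨h1, le_trans htm h2⟩ ⟨le_trans h1 htm, h2⟩ htm
end

section
/- Let h, g, P, R, δ, Q be positive reals with R > δ and Q ≥ χ_low², where χ_low = (h√P − √(2^(R−δ) − 1))/g ≥ 0, and let χ_high = (h√P + √(2^(R−δ) − 1))/g and t₁ = [(h²P + g²Q + 1) − √((h²P + g²Q + 1)² − 4h²g²PQ)]/(2hg√P). Then the function γ(t) = g²(Q − t²)/((h√P − g·t)² + 1) attains its maximum over [χ_low, min(χ_high, √Q)] at t** = max(χ_low, t₁). -/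
-- key algebraic identity: the cross term φ(u,v) factored through the root s₁
lemma phi_key (a K V d s₁ u v : ℝ) (ha : a ≠ 0)
    (hd2 : d ^ 2 = V ^ 2 - 4 * a ^ 2 * K) (hs1 : 2 * a * s₁ = V - d) :
    2*a*K - V*(u+v) + 2*a*u*v
      = (s₁ - u)*d + (s₁ - v)*(d + 2*a*(s₁ - u)) := by
  have hq4 : 4 * a * (a * s₁ ^ 2 - V * s₁ + a * K) = 0 := by
    linear_combination (2*a*s₁ + V - d) * hs1 + hd2 - 2*V*hs1
  have hq : a * s₁ ^ 2 - V * s₁ + a * K = 0 := by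
    rcases mul_eq_zero.mp hq4 with h0 | h0
    · exact absurd h0 (by simpa using ha)
    · exact h0
  linear_combination 2*hq + (u + v - 2*s₁) * hs1

-- monotonicity step in terms of the cross quantity
lemma gamma_step (a g Q K V u v : ℝ) (hg : 0 < g)
    (hK : K = g ^ 2 * Q) (hV : V = a ^ 2 + K + 1)
    (hkey : 0 ≤ (g*v - g*u) * (2*a*K - V*(g*u + g*v) + 2*a*(g*u)*(g*v))) :
    g ^ 2 * (Q - u ^ 2) / ((a - g * u) ^ 2 + 1)
      ≤ g ^ 2 * (Q - v ^ 2) / ((a - g * v) ^ 2 + 1) := by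
  subst hV hK
  rw [div_le_div_iff₀ (by positivity) (by positivity)]
  nlinarith [hkey, hg.le, mul_nonneg hg.le hkey]

-- decreasing branch: move left end to sl when s₁ ≤ sl ≤ s ≤ sK
lemma case1 (a K V d s₁ sl s sK : ℝ) (ha : 0 < a) (hd0 : 0 ≤ d)
    (hd2 : d ^ 2 = V ^ 2 - 4 * a ^ 2 * K) (hs1 : 2 * a * s₁ = V - d)
    (h1 : s₁ ≤ sl) (h2 : sl ≤ s) (h3 : s ≤ sK) (h4 : 2 * a * sK ≤ V) :
    0 ≤ (sl - s) * (2*a*K - V*(s + sl) + 2*a*s*sl) := by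
  have hkey := phi_key a K V d s₁ s sl (ne_of_gt ha) hd2 hs1
  rw [hkey]
  have e0 : 2*a*s ≤ 2*a*sK := by nlinarith
  have e1 : 0 ≤ d + 2*a*(s₁ - s) := by nlinarith
  have p1 : (s₁ - s)*d ≤ 0 :=
    mul_nonpos_of_nonpos_of_nonneg (by linarith) hd0
  have p2 : (s₁ - sl)*(d + 2*a*(s₁ - s)) ≤ 0 :=
    mul_nonpos_of_nonpos_of_nonneg (by linarith) e1
  have pφ : (s₁ - s)*d + (s₁ - sl)*(d + 2*a*(s₁ - s)) ≤ 0 := by linarith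
  have pm := mul_nonneg (neg_nonneg.mpr (show sl - s ≤ 0 by linarith)) (neg_nonneg.mpr pφ)
  nlinarith [pm]

-- moving to the critical point itself
lemma case2 (a K V d s₁ s : ℝ) (ha : 0 < a) (hd0 : 0 ≤ d)
    (hd2 : d ^ 2 = V ^ 2 - 4 * a ^ 2 * K) (hs1 : 2 * a * s₁ = V - d) :
    0 ≤ (s₁ - s) * (2*a*K - V*(s + s₁) + 2*a*s*s₁) := by
  have hkey := phi_key a K V d s₁ s s₁ (ne_of_gt ha) hd2 hs1
  rw [hkey]
  nlinarith [mul_nonneg (sq_nonneg (s₁ - s)) hd0]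

theorem stmt12 (h g P R δ Q : ℝ) (hh : 0 < h) (hg : 0 < g) (hP : 0 < P)
    (hR : 0 < R) (hδ : 0 < δ) (hQ : 0 < Q) (hRδ : R > δ)
    (γ : ℝ → ℝ)
    (hγ : γ = fun t : ℝ => g ^ 2 * (Q - t ^ 2) / ((h * Real.sqrt P - g * t) ^ 2 + 1))
    (χlow χhigh t₁ : ℝ)
    (hχlow : χlow = (h * Real.sqrt P - Real.sqrt ((2 : ℝ) ^ (R - δ) - 1)) / g)
    (hχlow0 : 0 ≤ χlow) (hfeas : Q ≥ χlow ^ 2)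
    (hχhigh : χhigh = (h * Real.sqrt P + Real.sqrt ((2 : ℝ) ^ (R - δ) - 1)) / g)
    (ht₁ : t₁ = ((h ^ 2 * P + g ^ 2 * Q + 1) -
        Real.sqrt ((h ^ 2 * P + g ^ 2 * Q + 1) ^ 2 - 4 * h ^ 2 * g ^ 2 * P * Q)) /
        (2 * h * g * Real.sqrt P)) :
    ∀ t ∈ Set.Icc χlow (min χhigh (Real.sqrt Q)), γ t ≤ γ (max χlow t₁) := by
  intro t ht
  obtain ⟨htl, htr⟩ := ht
  have htQ : t ≤ Real.sqrt Q := le_trans htr (min_le_right _ _)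
  have hsP : 0 < Real.sqrt P := Real.sqrt_pos.mpr hP
  have hsQ : 0 < Real.sqrt Q := Real.sqrt_pos.mpr hQ
  obtain ⟨a, ha⟩ : ∃ x : ℝ, x = h * Real.sqrt P := ⟨_, rfl⟩
  rw [← ha] at hγ
  have ha0 : 0 < a := ha ▸ mul_pos hh hsP
  have ha2 : a ^ 2 = h ^ 2 * P := by
    rw [ha, mul_pow, Real.sq_sqrt hP.le]
  obtain ⟨K, hK⟩ : ∃ x : ℝ, x = g ^ 2 * Q := ⟨_, rfl⟩
  have hK0 : 0 < K := by rw [hK]; positivity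
  obtain ⟨V, hV⟩ : ∃ x : ℝ, x = a ^ 2 + K + 1 := ⟨_, rfl⟩
  have hV0 : 0 < V := by rw [hV]; positivity
  obtain ⟨D, hD⟩ : ∃ x : ℝ, x = V ^ 2 - 4 * a ^ 2 * K := ⟨_, rfl⟩
  have hD0 : 0 ≤ D := by
    rw [hD, hV]; nlinarith [sq_nonneg (a^2 - K), hK0, sq_nonneg a]
  obtain ⟨d, hd⟩ : ∃ x : ℝ, x = Real.sqrt D := ⟨_, rfl⟩
  have hd0 : 0 ≤ d := hd ▸ Real.sqrt_nonneg D
  have hd2 : d ^ 2 = D := hd ▸ Real.sq_sqrt hD0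
  have hd2' : d ^ 2 = V ^ 2 - 4 * a ^ 2 * K := by rw [hd2, hD]
  -- s₁ = g * t₁ satisfies 2 a s₁ = V - d
  have hs1 : 2 * a * (g * t₁) = V - d := by
    have hDeq : (h ^ 2 * P + g ^ 2 * Q + 1) ^ 2 - 4 * h ^ 2 * g ^ 2 * P * Q = D := by
      rw [hD, hV, hK, ha2]; ring
    have hVeq : h ^ 2 * P + g ^ 2 * Q + 1 = V := by rw [hV, hK, ha2]
    rw [ht₁, hDeq, hVeq, ← hd, ha]
    field_simp
  -- √K = g * √Q
  have hsK : Real.sqrt K = g * Real.sqrt Q := by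
    rw [hK, Real.sqrt_mul (by positivity), Real.sqrt_sq hg.le]
  have hsK0 : 0 < Real.sqrt K := by rw [hsK]; positivity
  have hsK2 : (Real.sqrt K) ^ 2 = K := Real.sq_sqrt hK0.le
  -- V - 2 a √K > 0
  have hVK : 0 < V - 2 * a * Real.sqrt K := by
    have hVe : V - 2*a*Real.sqrt K = (a - Real.sqrt K)^2 + 1 := by
      rw [hV]; linear_combination - hsK2
    rw [hVe]; positivity
  -- V - 2 a √K ≤ d
  have hVKd : V - 2 * a * Real.sqrt K ≤ d := by
    have h2 : (V - 2*a*Real.sqrt K)^2 ≤ D := by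
      rw [hD]
      have e : 2*a*Real.sqrt K ≤ V := by linarith
      have e2 := mul_le_mul_of_nonneg_left e
        (by positivity : (0:ℝ) ≤ 4*a*Real.sqrt K)
      nlinarith [e2, hsK2]
    calc V - 2*a*Real.sqrt K = Real.sqrt ((V - 2*a*Real.sqrt K)^2) :=
          (Real.sqrt_sq hVK.le).symm
      _ ≤ d := by rw [hd]; exact Real.sqrt_le_sqrt h2
  -- χlow ≤ √Q
  have hχQ : χlow ≤ Real.sqrt Q := by
    calc χlow = Real.sqrt (χlow^2) := (Real.sqrt_sq hχlow0).symm
      _ ≤ Real.sqrt Q := Real.sqrt_le_sqrt hfeas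
  -- the step lemma specialized
  have step : ∀ u v : ℝ,
      0 ≤ (g*v - g*u) * (2*a*K - V*(g*u + g*v) + 2*a*(g*u)*(g*v)) → γ u ≤ γ v := by
    intro u v hkey
    rw [hγ]
    exact gamma_step a g Q K V u v hg hK hV hkey
  have hgtK : g * t ≤ Real.sqrt K := by
    rw [hsK]
    exact mul_le_mul_of_nonneg_left htQ hg.le
  rcases le_total t₁ χlow with hcase | hcase
  · -- max = χlow ; interval lies right of t₁ : decreasing branch
    rw [max_eq_left hcase]
    apply step t χlow
    have hA : g * t₁ ≤ g * χlow := mul_le_mul_of_nonneg_left hcase hg.le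
    have hB : g * χlow ≤ g * t := mul_le_mul_of_nonneg_left htl hg.le
    exact case1 a K V d (g*t₁) (g*χlow) (g*t) (Real.sqrt K) ha0 hd0 hd2' hs1
      hA hB hgtK (by linarith)
  · -- max = t₁ : go to the critical point
    rw [max_eq_right hcase]
    apply step t t₁
    exact case2 a K V d (g*t₁) (g*t) ha0 hd0 hd2' hs1
end
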